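/- Main approximation theorem (first bound): Let M = (tr(A_iA_j))_{i,j=1}^n ∈ CPSD^n with ℓ = max_i tr(A_i) and L = max_i M_{ii}. For every 0 < ε < (1/2)min{ℓ², L} there exists N ∈ CPSD^n with cpsd-rank(N) ≤ n⌈9Lℓ²/(2ε²)⌉ and |M_{ij} − N_{ij}| < ε for all i, j. -/

import Mathlib

/-!
Truncate the spectrum of each `A i` below `θ = ℓ / K`: since `tr (A i) ≤ ℓ`, at most `K`
eigenvalues survive, and the discarded ones contribute at most `θ ∑ λ ≤ ℓ² / K` to the squared
Frobenius distance. The truncations `B i = C i (C i)ᴴ` have at most `K` columns each, and by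
Cauchy–Schwarz for the trace inner product their Gram matrix is within `2 √(ℓ² L / K) < ε` of `M`.
Stacking the `C i` into one matrix `D`, we get `B i = D Eᵢ Dᴴ` for the coordinate projection `Eᵢ`
onto the `i`-th block, and `√(DᴴD) Eᵢ √(DᴴD)` are psd matrices of size `∑ #columns ≤ n K` with the
same Gram matrix as the `B i`.
-/

open Matrix Finset Unitary

namespace Matrix

theorem abs_trace_mul_conjTranspose_le {m n : Type*} [Fintype m] [Fintype n]
    (X Y : Matrix m n ℝ) : |(X * Yᴴ).trace| ≤ √(X * Xᴴ).trace * √(Y * Yᴴ).trace := by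
  have hsum (Z W : Matrix m n ℝ) : (Z * Wᴴ).trace = ∑ p : m × n, Z p.1 p.2 * W p.1 p.2 := by
    simp [trace, mul_apply, Fintype.sum_prod_type]
  rw [hsum, hsum, hsum]
  calc |∑ p : m × n, X p.1 p.2 * Y p.1 p.2|
      ≤ ∑ p : m × n, |X p.1 p.2| * |Y p.1 p.2| := by
        simpa only [abs_mul] using abs_sum_le_sum_abs (fun p : m × n => X p.1 p.2 * Y p.1 p.2) univ
    _ ≤ √(∑ p : m × n, |X p.1 p.2| ^ 2) * √(∑ p : m × n, |Y p.1 p.2| ^ 2) :=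
        Real.sum_mul_le_sqrt_mul_sqrt _ _ _
    _ = _ := by simp only [sq_abs, ← sq]

theorem abs_trace_mul_sub_trace_mul_le {m : Type*} [Fintype m] {X X' Y Y' : Matrix m m ℝ}
    (hX : X.IsHermitian) (hX' : X'.IsHermitian) (hY : Y.IsHermitian) (hY' : Y'.IsHermitian) :
    |(X * Y).trace - (X' * Y').trace| ≤
      √((X - X') * (X - X')).trace * √(Y * Y).trace +
        √(X' * X').trace * √((Y - Y') * (Y - Y')).trace := by
  have hsplit : (X * Y).trace - (X' * Y').trace =
      ((X - X') * Y).trace + (X' * (Y - Y')).trace := by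
    rw [sub_mul, mul_sub, trace_sub, trace_sub]
    ring
  have h1 := abs_trace_mul_conjTranspose_le (X - X') Y
  have h2 := abs_trace_mul_conjTranspose_le X' (Y - Y')
  rw [(hX.sub hX').eq, hY.eq] at h1
  rw [hX'.eq, (hY.sub hY').eq] at h2
  rw [hsplit]
  exact (abs_add_le _ _).trans (add_le_add h1 h2)

theorem trace_submatrix_equiv {m n R : Type*} [Fintype m] [Fintype n] [AddCommMonoid R]
    (X : Matrix n n R) (e : m ≃ n) : (X.submatrix e e).trace = X.trace :=
  e.sum_comp fun i => X i i

theorem trace_conjStarAlgAut {m R : Type*} [Fintype m] [DecidableEq m] [CommRing R]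
    [StarRing R] (U : unitaryGroup m R) (X : Matrix m m R) :
    (conjStarAlgAut R _ U X).trace = X.trace := by
  rw [conjStarAlgAut_apply, trace_mul_cycle, coe_star_mul_self, one_mul]

theorem submatrix_mul_conjTranspose_submatrix_of_forall_notMem {m n R : Type*} [Fintype n]
    [Semiring R] [StarRing R] {X : Matrix m n R} {s : Finset n} (hX : ∀ a, ∀ j ∉ s, X a j = 0) :
    X.submatrix id ((↑) : s → n) * (X.submatrix id ((↑) : s → n))ᴴ = X * Xᴴ := by
  ext a b
  simp only [mul_apply, submatrix_apply, conjTranspose_apply, id]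
  rw [Finset.sum_coe_sort s (fun j => X a j * star (X b j))]
  exact Finset.sum_subset (subset_univ s) fun j _ hj => by simp [hX a j hj]

theorem exists_mul_conjTranspose_eq_conjStarAlgAut_diagonal {m : Type*} [Fintype m]
    [DecidableEq m] (U : unitaryGroup m ℝ) {g : m → ℝ} (hg : 0 ≤ g) {s : Finset m}
    (hs : ∀ j ∉ s, g j = 0) :
    ∃ C : Matrix m s ℝ, C * Cᴴ = conjStarAlgAut ℝ _ U (diagonal g) := by
  set X := (U : Matrix m m ℝ) * diagonal fun j => √(g j)
  have hX : ∀ a, ∀ j ∉ s, X a j = 0 := fun a j hj => by simp [X, mul_diagonal, hs j hj]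
  refine ⟨X.submatrix id (↑), ?_⟩
  rw [submatrix_mul_conjTranspose_submatrix_of_forall_notMem hX]
  simp only [X, conjTranspose_mul, diagonal_conjTranspose, conjStarAlgAut_apply,
    star_eq_conjTranspose, mul_assoc, ← mul_assoc (diagonal _) (diagonal _), diagonal_mul_diagonal]
  congr
  funext j
  simp [Real.mul_self_sqrt (hg j)]

theorem PosSemidef.exists_eigenvalue_truncation {m : Type*} [Fintype m] [DecidableEq m]
    {A : Matrix m m ℝ} (hA : A.PosSemidef) {θ : ℝ} (hθ : 0 < θ) :
    ∃ (s : Finset m) (C : Matrix m s ℝ), θ * #s ≤ A.trace ∧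
      ((A - C * Cᴴ) * (A - C * Cᴴ)).trace ≤ θ * A.trace ∧
      (C * Cᴴ * (C * Cᴴ)).trace ≤ (A * A).trace := by
  set ev := hA.1.eigenvalues
  have hev : 0 ≤ ev := hA.eigenvalues_nonneg
  set g : m → ℝ := fun j => if θ < ev j then ev j else 0
  set s : Finset m := {j | θ < ev j}
  obtain ⟨C, hC⟩ := exists_mul_conjTranspose_eq_conjStarAlgAut_diagonal
    hA.1.eigenvectorUnitary (s := s) (g := g)
    (fun j => by simp only [g]; split_ifs; exacts [hev j, le_rfl])
    (fun j hj => if_neg (by simpa [s] using hj))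
  set conj := conjStarAlgAut ℝ _ hA.1.eigenvectorUnitary
  have hA' : A = conj (diagonal ev) := hA.1.spectral_theorem
  have htrA : A.trace = ∑ j, ev j := by rw [hA', trace_conjStarAlgAut, trace_diagonal]
  have htrace_mul (a b : m → ℝ) :
      (conj (diagonal a) * conj (diagonal b)).trace = ∑ j, a j * b j := by
    rw [← map_mul, trace_conjStarAlgAut, diagonal_mul_diagonal, trace_diagonal]
  refine ⟨s, C, ?_, ?_, ?_⟩
  · calc θ * #s = #s • θ := by rw [nsmul_eq_mul, mul_comm]
      _ ≤ ∑ j ∈ s, ev j := card_nsmul_le_sum s ev θ fun j hj => (by simpa [s] using hj : θ < ev j).le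
      _ ≤ A.trace := htrA ▸ sum_le_sum_of_subset_of_nonneg (subset_univ s) fun j _ _ => hev j
  · rw [htrA, hC, hA', ← map_sub, diagonal_sub, htrace_mul, mul_sum]
    refine sum_le_sum fun j _ => ?_
    simp only [g]
    split_ifs with h
    · simpa using mul_nonneg hθ.le (hev j)
    · simpa using mul_le_mul_of_nonneg_right (not_lt.mp h) (hev j)
  · rw [hC, hA', htrace_mul, htrace_mul]
    refine sum_le_sum fun j _ => ?_
    simp only [g]
    split_ifs
    · rfl
    · simpa using mul_self_nonneg (ev j)

theorem PosSemidef.exists_lowRank_approx {m : Type*} [Fintype m] [DecidableEq m]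
    {A : Matrix m m ℝ} (hA : A.PosSemidef) {K : ℕ} (hK : 0 < K) {ℓ : ℝ} (hℓ : 0 < ℓ)
    (htr : A.trace ≤ ℓ) :
    ∃ (s : Finset m) (C : Matrix m s ℝ), #s ≤ K ∧
      ((A - C * Cᴴ) * (A - C * Cᴴ)).trace ≤ ℓ ^ 2 / K ∧
      (C * Cᴴ * (C * Cᴴ)).trace ≤ (A * A).trace := by
  have hK' : (0 : ℝ) < K := Nat.cast_pos.mpr hK
  obtain ⟨s, C, hcard, herr, hsq⟩ := hA.exists_eigenvalue_truncation (div_pos hℓ hK')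
  refine ⟨s, C, ?_, ?_, hsq⟩
  · have : ℓ / K * #s ≤ ℓ / K * K := by rw [div_mul_cancel₀ ℓ hK'.ne']; linarith
    exact_mod_cast le_of_mul_le_mul_left this (div_pos hℓ hK')
  · calc _ ≤ ℓ / K * A.trace := herr
      _ ≤ ℓ / K * ℓ := by gcongr
      _ = ℓ ^ 2 / K := by ring

theorem exists_isHermitian_trace_conj_mul_conj_eq {m k 𝕜 : Type*} [Fintype m] [Fintype k]
    [DecidableEq k] [RCLike 𝕜] (D : Matrix m k 𝕜) :
    ∃ R : Matrix k k 𝕜, R.IsHermitian ∧ ∀ E F : Matrix k k 𝕜,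
      (R * E * R * (R * F * R)).trace = (D * E * Dᴴ * (D * F * Dᴴ)).trace := by
  open ComplexOrder MatrixOrder in
  obtain ⟨R, hR, hRR⟩ : ∃ R : Matrix k k 𝕜, R.IsHermitian ∧ R * R = Dᴴ * D :=
    ⟨CFC.sqrt (Dᴴ * D), (CFC.sqrt_nonneg _).posSemidef.1,
      CFC.sqrt_mul_sqrt_self _ (posSemidef_conjTranspose_mul_self D).nonneg⟩
  refine ⟨R, hR, fun E F => ?_⟩
  calc (R * E * R * (R * F * R)).trace = (R * (E * (R * R) * F * R)).trace := by
        simp only [Matrix.mul_assoc]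
    _ = (E * (R * R) * F * (R * R)).trace := by
        rw [trace_mul_comm]; simp only [Matrix.mul_assoc]
    _ = (D * (E * Dᴴ * D * F * Dᴴ)).trace := by
        rw [hRR, trace_mul_comm D]; simp only [Matrix.mul_assoc]
    _ = (D * E * Dᴴ * (D * F * Dᴴ)).trace := by simp only [Matrix.mul_assoc]

theorem exists_posSemidef_sigma_trace_mul_eq {ι m : Type*} {κ : ι → Type*} [Fintype ι]
    [DecidableEq ι] [Fintype m] [∀ i, Fintype (κ i)] [∀ i, DecidableEq (κ i)]
    (C : (i : ι) → Matrix m (κ i) ℝ) :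
    ∃ f : ι → Matrix (Σ i, κ i) (Σ i, κ i) ℝ, (∀ i, (f i).PosSemidef) ∧
      ∀ i j, (f i * f j).trace = (C i * (C i)ᴴ * (C j * (C j)ᴴ)).trace := by
  let D : Matrix m (Σ i, κ i) ℝ := of fun a p => C p.1 a p.2
  let E (i : ι) : Matrix (Σ i, κ i) (Σ i, κ i) ℝ := diagonal fun p => if p.1 = i then 1 else 0
  have hE (i : ι) : (E i).PosSemidef := posSemidef_diagonal_iff.mpr fun p => by
    by_cases h : p.1 = i <;> simp [h]
  have hDED (i : ι) : D * E i * Dᴴ = C i * (C i)ᴴ := by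
    ext a b
    rw [mul_apply, mul_apply, Fintype.sum_sigma]
    simp [D, E, mul_diagonal]
  obtain ⟨R, hR, hRtr⟩ := exists_isHermitian_trace_conj_mul_conj_eq D
  refine ⟨fun i => R * E i * R, fun i => ?_, fun i j => by rw [hRtr, hDED, hDED]⟩
  simpa only [hR.eq] using (hE i).mul_mul_conjTranspose_same R

end Matrix

theorem sqrt_div_ceil_mul_sqrt_lt {ℓ L ε : ℝ} (hℓ : 0 < ℓ) (hL : 0 < L) (hε : 0 < ε) :
    √(ℓ ^ 2 / ⌈9 * L * ℓ ^ 2 / (2 * ε ^ 2)⌉₊) * √L < ε / 2 := by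
  set K := ⌈9 * L * ℓ ^ 2 / (2 * ε ^ 2)⌉₊
  have hK : 9 * L * ℓ ^ 2 / (2 * ε ^ 2) ≤ K := Nat.le_ceil _
  have hK0 : (0 : ℝ) < K := hK.trans_lt' (by positivity)
  rw [← Real.sqrt_mul (by positivity), Real.sqrt_lt' (by positivity), div_mul_eq_mul_div,
    div_lt_iff₀ hK0]
  rw [div_le_iff₀ (by positivity)] at hK
  nlinarith [mul_pos hK0 (pow_pos hε 2)]

theorem cpsd_approximation_first_bound_general {n d : ℕ}
    (M : Matrix (Fin n) (Fin n) ℝ) (A : Fin n → Matrix (Fin d) (Fin d) ℝ)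
    (hA : ∀ i, (A i).PosSemidef)
    (hGram : ∀ i j, M i j = ((A i) * (A j)).trace)
    (ℓ L : ℝ) (hℓ : ℓ = ⨆ i, (A i).trace) (hL : L = ⨆ i, M i i)
    (ε : ℝ) (hε0 : 0 < ε) (hε : ε < (1 / 2) * min (ℓ ^ 2) L) :
    ∃ (N : Matrix (Fin n) (Fin n) ℝ) (r : ℕ)
      (f : Fin n → Matrix (Fin r) (Fin r) ℝ),
      (∀ i, (f i).PosSemidef) ∧
      (∀ i j, N i j = ((f i) * (f j)).trace) ∧
      r ≤ n * ⌈9 * L * ℓ ^ 2 / (2 * ε ^ 2)⌉₊ ∧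
      ∀ i j, |M i j - N i j| < ε := by
  have hL0 : 0 < L := by linarith [min_le_right (ℓ ^ 2) L]
  have hℓ0 : 0 < ℓ := by
    have hℓ_nonneg : 0 ≤ ℓ := hℓ ▸ Real.iSup_nonneg fun i => (hA i).trace_nonneg
    have hℓ_sq : 0 < ℓ ^ 2 := by linarith [min_le_left (ℓ ^ 2) L]
    nlinarith
  set K := ⌈9 * L * ℓ ^ 2 / (2 * ε ^ 2)⌉₊
  have hK : 0 < K := Nat.ceil_pos.mpr (by positivity)
  have htr_le (i) : (A i).trace ≤ ℓ :=
    hℓ ▸ le_ciSup (f := fun i => (A i).trace) (Set.finite_range _).bddAbove i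
  have hsq_le (i) : (A i * A i).trace ≤ L :=
    hGram i i ▸ hL ▸ le_ciSup (f := fun i => M i i) (Set.finite_range _).bddAbove i
  choose s C hcard herr hBsq using fun i => (hA i).exists_lowRank_approx hK hℓ0 (htr_le i)
  obtain ⟨f, hf, hftr⟩ := exists_posSemidef_sigma_trace_mul_eq C
  let e := (Fintype.equivFin (Σ i, s i)).symm
  refine ⟨_, _, fun i => (f i).submatrix e e, fun i => (posSemidef_submatrix_equiv e).mpr (hf i),
    fun i j => rfl, ?_, fun i j => ?_⟩
  · simpa [Fintype.card_sigma] using sum_le_card_nsmul univ (fun i => #(s i)) K fun i _ => hcard i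
  · have hB (i) : (C i * (C i)ᴴ).IsHermitian := (posSemidef_self_mul_conjTranspose (C i)).1
    have hsmall := sqrt_div_ceil_mul_sqrt_lt hℓ0 hL0 hε0
    rw [submatrix_mul_equiv, trace_submatrix_equiv, hftr, hGram]
    calc _ ≤ _ := abs_trace_mul_sub_trace_mul_le (hA i).1 (hB i) (hA j).1 (hB j)
      _ ≤ √(ℓ ^ 2 / K) * √L + √L * √(ℓ ^ 2 / K) := by
        gcongr
        exacts [herr i, hsq_le j, (hBsq i).trans (hsq_le i), herr j]
      _ < ε := by linarith [mul_comm √L √(ℓ ^ 2 / K)]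

theorem cpsd_approximation_first_bound {n d : ℕ} (hn : 0 < n)
    (M : Matrix (Fin n) (Fin n) ℝ) (A : Fin n → Matrix (Fin d) (Fin d) ℝ)
    (hA : ∀ i, (A i).PosSemidef)
    (hGram : ∀ i j, M i j = ((A i) * (A j)).trace)
    (ℓ L : ℝ) (hℓ : ℓ = ⨆ i, (A i).trace) (hL : L = ⨆ i, M i i)
    (ε : ℝ) (hε0 : 0 < ε) (hε : ε < (1 / 2) * min (ℓ ^ 2) L) :
    ∃ (N : Matrix (Fin n) (Fin n) ℝ) (r : ℕ)
      (f : Fin n → Matrix (Fin r) (Fin r) ℝ),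
      (∀ i, (f i).PosSemidef) ∧
      (∀ i j, N i j = ((f i) * (f j)).trace) ∧
      r ≤ n * ⌈9 * L * ℓ ^ 2 / (2 * ε ^ 2)⌉₊ ∧
      ∀ i j, |M i j - N i j| < ε :=
  cpsd_approximation_first_bound_general M A hA hGram ℓ L hℓ hL ε hε0 hε
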